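/- Let (x_i) be a normalized 1-unconditional sequence in a real Banach space X that is C-right dominant. Let W = X × X with the norm ‖(u, v)‖ = max(‖u‖, ‖v‖), and set w_{2i−1} = (x_i, 0), w_{2i} = (0, x_i) for all i. Let J_X and J_W denote the jamesification norms associated with (x_i) in X and with (w_i) in W, respectively. Then there exist constants c, c′ > 0 depending only on C such that for every finitely supported a : ℕ → ℝ: (1) if b is the sequence with b_{2i−1} = −a_i and b_{2i} = a_i for all i, then c·‖Σ_i a_i x_i‖_X ≤ J_W(b) ≤ c′·‖Σ_i a_i x_i‖_X; and (2) if ã is the sequence with ã_{2i−1} = a_i and ã_{2i} = 0 for all i, then c·J_X(a) ≤ J_W(ã) ≤ c′·J_X(a). -/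
import Mathlib


open scoped BigOperators

section Defs

variable {E : Type*} [NormedAddCommGroup E] [NormedSpace ℝ E]

/-- A sequence is 1-unconditional if changing signs of coefficients does not change the
norm of finite linear combinations. -/
def OneUnconditional (x : ℕ → E) : Prop :=
  ∀ (s : Finset ℕ) (a ε : ℕ → ℝ), (∀ i, ε i = 1 ∨ ε i = -1) →
    ‖∑ i ∈ s, (ε i * a i) • x i‖ = ‖∑ i ∈ s, a i • x i‖

/-- A sequence `x` is `C`-right dominant: for indices `k 0 ≤ m 0 < k 1 ≤ m 1 < ⋯` every
finite linear combination along the `k`'s is `C`-dominated by the same combination along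
the `m`'s. -/
def RightDominant (C : ℝ) (x : ℕ → E) : Prop :=
  ∀ (r : ℕ) (k m : ℕ → ℕ) (a : ℕ → ℝ), (∀ i, k i ≤ m i) → (∀ i, m i < k (i + 1)) →
    ‖∑ i ∈ Finset.range r, a i • x (k i)‖ ≤ C * ‖∑ i ∈ Finset.range r, a i • x (m i)‖

/-- The quantities whose supremum defines the jamesification norm `J(a)`:
`‖∑_{n<r} (∑_{i ∈ [k n, m n]} a i) • x (k n)‖` over all systems
`k 0 ≤ m 0 < k 1 ≤ m 1 < ⋯`. -/
def jamesSet (x : ℕ → E) (a : ℕ → ℝ) : Set ℝ :=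
  {v | ∃ (r : ℕ) (k m : ℕ → ℕ), (∀ n, k n ≤ m n) ∧ (∀ n, m n < k (n + 1)) ∧
    v = ‖∑ n ∈ Finset.range r, (∑ i ∈ Finset.Icc (k n) (m n), a i) • x (k n)‖}

/-- The jamesification norm of a finitely supported sequence of coefficients. -/
noncomputable def jamesNorm (x : ℕ → E) (a : ℕ → ℝ) : ℝ :=
  sSup (jamesSet x a)

end Defs


open scoped BigOperators
open Finset

section Helpers
variable {E : Type*} [NormedAddCommGroup E] [NormedSpace ℝ E]

lemma myConsecStrict {p : ℕ → ℕ} {r : ℕ} (h : ∀ i, i + 1 < r → p i < p (i + 1)) :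
    ∀ i j, i < j → j < r → p i < p j := by
  intro i j hij hjr
  induction j with
  | zero => omega
  | succ j ih =>
    rcases Nat.lt_or_ge i j with h' | h'
    · exact lt_trans (ih h' (by omega)) (h j (by omega))
    · have hij' : i = j := by omega
      subst hij'; exact h i hjr

lemma myZeroMem (x : ℕ → E) (a : ℕ → ℝ) : (0 : ℝ) ∈ jamesSet x a :=
  ⟨0, fun n => 2 * n, fun n => 2 * n, fun _ => le_rfl, fun n => by show 2 * n < 2 * (n + 1); omega, by simp⟩

lemma myBddAbove {x : ℕ → E} (hx : ∀ i, ‖x i‖ = 1) {a : ℕ → ℝ} {N : ℕ}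
    (ha : ∀ i, N ≤ i → a i = 0) : BddAbove (jamesSet x a) := by
  set A : ℝ := ∑ i ∈ range N, |a i| with hA
  have hA0 : 0 ≤ A := Finset.sum_nonneg fun _ _ => abs_nonneg _
  refine ⟨N * A, ?_⟩
  rintro v ⟨r, k, m, hkm, hmk, rfl⟩
  have hk : StrictMono k := strictMono_nat_of_lt_succ fun n => lt_of_le_of_lt (hkm n) (hmk n)
  calc ‖∑ n ∈ range r, (∑ i ∈ Finset.Icc (k n) (m n), a i) • x (k n)‖
      ≤ ∑ n ∈ range r, ‖(∑ i ∈ Finset.Icc (k n) (m n), a i) • x (k n)‖ := norm_sum_le _ _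
    _ ≤ ∑ n ∈ range r, (if n < N then A else 0) := by
        apply Finset.sum_le_sum
        intro n _
        rw [norm_smul, hx, mul_one]
        by_cases hn : n < N
        · rw [if_pos hn]
          calc ‖∑ i ∈ Finset.Icc (k n) (m n), a i‖
              ≤ ∑ i ∈ Finset.Icc (k n) (m n), |a i| := by
                simpa using norm_sum_le (Finset.Icc (k n) (m n)) (fun i => a i)
            _ = ∑ i ∈ (Finset.Icc (k n) (m n)).filter (· < N), |a i| := by
                refine (Finset.sum_subset (Finset.filter_subset _ _) ?_).symm
                intro i _ hi
                have : N ≤ i := by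
                  simp only [Finset.mem_filter] at hi
                  by_contra hcon
                  exact hi ⟨‹i ∈ _›, by omega⟩
                simp [ha i this]
            _ ≤ A := by
                apply Finset.sum_le_sum_of_subset_of_nonneg
                · intro i hi
                  simp only [Finset.mem_filter] at hi
                  exact Finset.mem_range.mpr hi.2
                · intro i _ _; exact abs_nonneg _
        · rw [if_neg hn]
          have hkn : N ≤ k n := le_trans (by omega) (hk.le_apply)
          have : ∑ i ∈ Finset.Icc (k n) (m n), a i = 0 := by
            apply Finset.sum_eq_zero
            intro i hi
            exact ha i (le_trans hkn (Finset.mem_Icc.mp hi).1)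
          simp [this]
    _ = ((range r).filter (· < N)).card * A := by
        rw [← Finset.sum_filter, Finset.sum_const, nsmul_eq_mul]
    _ ≤ N * A := by
        apply mul_le_mul_of_nonneg_right _ hA0
        have : ((range r).filter (· < N)).card ≤ N := by
          have hsub : (range r).filter (· < N) ⊆ range N := fun i hi => by
            simp only [Finset.mem_filter] at hi; exact Finset.mem_range.mpr hi.2
          simpa using Finset.card_le_card hsub
        exact_mod_cast this

lemma myUncondProj {x : ℕ → E} (hx : OneUnconditional x) (a : ℕ → ℝ) {s t : Finset ℕ}
    (hst : s ⊆ t) : ‖∑ i ∈ s, a i • x i‖ ≤ ‖∑ i ∈ t, a i • x i‖ := by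
  set ε : ℕ → ℝ := fun i => if i ∈ s then 1 else -1 with hε
  have hεpm : ∀ i, ε i = 1 ∨ ε i = -1 := fun i => by
    by_cases h : i ∈ s <;> simp [hε, h]
  have key := hx t a ε hεpm
  have h1 : ∑ i ∈ t \ s, a i • x i + ∑ i ∈ s, a i • x i = ∑ i ∈ t, a i • x i :=
    Finset.sum_sdiff hst
  have h2 : ∑ i ∈ t, (ε i * a i) • x i
      = ∑ i ∈ s, a i • x i - ∑ i ∈ t \ s, a i • x i := by
    rw [← Finset.sum_sdiff (f := fun i => (ε i * a i) • x i) hst]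
    have e1 : ∑ i ∈ t \ s, (ε i * a i) • x i = -∑ i ∈ t \ s, a i • x i := by
      rw [← Finset.sum_neg_distrib]
      apply Finset.sum_congr rfl
      intro i hi
      have : i ∉ s := (Finset.mem_sdiff.mp hi).2
      simp [hε, this, neg_smul]
    have e2 : ∑ i ∈ s, (ε i * a i) • x i = ∑ i ∈ s, a i • x i := by
      apply Finset.sum_congr rfl
      intro i hi
      simp [hε, hi]
    rw [e1, e2]; abel
  have h3 : (2 : ℝ) • ∑ i ∈ s, a i • x i
      = ∑ i ∈ t, a i • x i + ∑ i ∈ t, (ε i * a i) • x i := by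
    rw [h2, ← h1, two_smul]; abel
  have h4 : (2 : ℝ) * ‖∑ i ∈ s, a i • x i‖ ≤ 2 * ‖∑ i ∈ t, a i • x i‖ := by
    calc (2 : ℝ) * ‖∑ i ∈ s, a i • x i‖ = ‖(2 : ℝ) • ∑ i ∈ s, a i • x i‖ := by
          rw [norm_smul]; norm_num
      _ ≤ ‖∑ i ∈ t, a i • x i‖ + ‖∑ i ∈ t, (ε i * a i) • x i‖ := by
          rw [h3]; exact norm_add_le _ _
      _ = 2 * ‖∑ i ∈ t, a i • x i‖ := by rw [key]; ring
  linarith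

end Helpers
section Helpers2
variable {E : Type*} [NormedAddCommGroup E] [NormedSpace ℝ E]

lemma mySumMapLe {x : ℕ → E} (hx : OneUnconditional x) {a : ℕ → ℝ} {N : ℕ}
    (ha : ∀ i, N ≤ i → a i = 0) (p : ℕ → ℕ) (r : ℕ)
    (hp : ∀ i, i + 1 < r → p i < p (i + 1)) :
    ‖∑ n ∈ Finset.range r, a (p n) • x (p n)‖ ≤ ‖∑ i ∈ Finset.range N, a i • x i‖ := by
  have hmono := myConsecStrict hp
  have hinj : ∀ i ∈ Finset.range r, ∀ j ∈ Finset.range r, p i = p j → i = j := by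
    intro i hi j hj hij
    rcases Nat.lt_trichotomy i j with h | h | h
    · exact absurd hij (Nat.ne_of_lt (hmono i j h (Finset.mem_range.mp hj)))
    · exact h
    · exact absurd hij.symm (Nat.ne_of_lt (hmono j i h (Finset.mem_range.mp hi)))
  rw [← Finset.sum_image (g := p) (f := fun i => a i • x i) hinj]
  have hsub : ∑ i ∈ (Finset.range r).image p, a i • x i
      = ∑ i ∈ ((Finset.range r).image p).filter (· < N), a i • x i := by
    refine (Finset.sum_subset (Finset.filter_subset _ _) ?_).symm
    intro i hi hni
    have : N ≤ i := by
      by_contra hcon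
      exact hni (Finset.mem_filter.mpr ⟨hi, by omega⟩)
    simp [ha i this]
  rw [hsub]
  exact myUncondProj hx a fun i hi => by
    simp only [Finset.mem_filter] at hi; exact Finset.mem_range.mpr hi.2

lemma myDom {x : ℕ → E} {C : ℝ} (hd : RightDominant C x) (r : ℕ) (k m : ℕ → ℕ) (b : ℕ → ℝ)
    (h1 : ∀ n, n < r → k n ≤ m n) (h2 : ∀ n, n + 1 < r → m n < k (n + 1)) :
    ‖∑ i ∈ Finset.range r, b i • x (k i)‖ ≤ C * ‖∑ i ∈ Finset.range r, b i • x (m i)‖ := by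
  set B : ℕ := (∑ n ∈ Finset.range r, m n) + 1 with hB
  have hmB : ∀ n, n < r → m n < B := by
    intro n hn
    have := Finset.single_le_sum (f := m) (fun _ _ => Nat.zero_le _) (Finset.mem_range.mpr hn)
    omega
  set k' : ℕ → ℕ := fun n => if n < r then k n else B + 2 * n with hk'
  set m' : ℕ → ℕ := fun n => if n < r then m n else B + 2 * n + 1 with hm'
  have c1 : ∀ n, k' n ≤ m' n := by
    intro n
    by_cases hn : n < r
    · simp only [hk', hm', if_pos hn]; exact h1 n hn
    · simp only [hk', hm', if_neg hn]; omega
  have c2 : ∀ n, m' n < k' (n + 1) := by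
    intro n
    by_cases hn : n < r
    · by_cases hn1 : n + 1 < r
      · simp only [hk', hm', if_pos hn, if_pos hn1]; exact h2 n hn1
      · simp only [hk', hm', if_pos hn, if_neg hn1]
        have := hmB n hn; omega
    · have hn1 : ¬ n + 1 < r := by omega
      simp only [hk', hm', if_neg hn, if_neg hn1]; omega
  have key := hd r k' m' b c1 c2
  have e1 : ∑ i ∈ Finset.range r, b i • x (k' i) = ∑ i ∈ Finset.range r, b i • x (k i) := by
    apply Finset.sum_congr rfl
    intro i hi
    simp [hk', if_pos (Finset.mem_range.mp hi)]
  have e2 : ∑ i ∈ Finset.range r, b i • x (m' i) = ∑ i ∈ Finset.range r, b i • x (m i) := by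
    apply Finset.sum_congr rfl
    intro i hi
    simp [hm', if_pos (Finset.mem_range.mp hi)]
  rwa [e1, e2] at key

lemma myMemJames (x : ℕ → E) (a : ℕ → ℝ) (r : ℕ) (k m : ℕ → ℕ)
    (h1 : ∀ n, n < r → k n ≤ m n) (h2 : ∀ n, n + 1 < r → m n < k (n + 1)) :
    ‖∑ n ∈ Finset.range r, (∑ i ∈ Finset.Icc (k n) (m n), a i) • x (k n)‖ ∈ jamesSet x a := by
  set B : ℕ := (∑ n ∈ Finset.range r, m n) + 1 with hB
  have hmB : ∀ n, n < r → m n < B := by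
    intro n hn
    have := Finset.single_le_sum (f := m) (fun _ _ => Nat.zero_le _) (Finset.mem_range.mpr hn)
    omega
  set k' : ℕ → ℕ := fun n => if n < r then k n else B + 2 * n with hk'
  set m' : ℕ → ℕ := fun n => if n < r then m n else B + 2 * n + 1 with hm'
  have c1 : ∀ n, k' n ≤ m' n := by
    intro n
    by_cases hn : n < r
    · simp only [hk', hm', if_pos hn]; exact h1 n hn
    · simp only [hk', hm', if_neg hn]; omega
  have c2 : ∀ n, m' n < k' (n + 1) := by
    intro n
    by_cases hn : n < r
    · by_cases hn1 : n + 1 < r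
      · simp only [hk', hm', if_pos hn, if_pos hn1]; exact h2 n hn1
      · simp only [hk', hm', if_pos hn, if_neg hn1]
        have := hmB n hn; omega
    · have hn1 : ¬ n + 1 < r := by omega
      simp only [hk', hm', if_neg hn, if_neg hn1]; omega
  refine ⟨r, k', m', c1, c2, ?_⟩
  congr 1
  apply Finset.sum_congr rfl
  intro n hn
  have hn' := Finset.mem_range.mp hn
  simp [hk', hm', if_pos hn']

lemma myEnum {M : Type*} [AddCommMonoid M] (s : Finset ℕ) (f : ℕ → M) :
    ∃ e : ℕ → ℕ, (∀ i, i + 1 < s.card → e i < e (i + 1)) ∧ (∀ i, i < s.card → e i ∈ s) ∧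
      ∑ n ∈ s, f n = ∑ i ∈ Finset.range s.card, f (e i) := by
  set t := s.card with ht
  set e : ℕ → ℕ := fun i => if h : i < t then (s.orderEmbOfFin ht.symm ⟨i, h⟩ : ℕ) else 0 with he
  have hmem : ∀ i, i < t → e i ∈ s := by
    intro i h
    simp only [he, dif_pos h]
    exact Finset.orderEmbOfFin_mem s ht.symm ⟨i, h⟩
  have hstrict : ∀ i, i + 1 < t → e i < e (i + 1) := by
    intro i h
    simp only [he, dif_pos (by omega : i < t), dif_pos h]
    exact (s.orderEmbOfFin ht.symm).strictMono (by exact Fin.mk_lt_mk.mpr (by omega))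
  refine ⟨e, hstrict, hmem, ?_⟩
  have hinj : ∀ i ∈ Finset.range t, ∀ j ∈ Finset.range t, e i = e j → i = j := by
    have hm := myConsecStrict (p := e) (r := t) hstrict
    intro i hi j hj hij
    rcases Nat.lt_trichotomy i j with h | h | h
    · exact absurd hij (Nat.ne_of_lt (hm i j h (Finset.mem_range.mp hj)))
    · exact h
    · exact absurd hij.symm (Nat.ne_of_lt (hm j i h (Finset.mem_range.mp hi)))
  have himg : (Finset.range t).image e = s := by
    apply Finset.eq_of_subset_of_card_le
    · intro i hi
      obtain ⟨j, hj, rfl⟩ := Finset.mem_image.mp hi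
      exact hmem j (Finset.mem_range.mp hj)
    · rw [Finset.card_image_of_injOn (fun i hi j hj => hinj i hi j hj)]
      simp [ht]
  conv_lhs => rw [← himg]
  exact Finset.sum_image hinj

lemma mySumSplit {M : Type*} [AddCommMonoid M] (g : ℕ → M) (t : ℕ) :
    ∑ i ∈ Finset.range t, g i
      = ∑ j ∈ Finset.range ((t + 1) / 2), g (2 * j) + ∑ j ∈ Finset.range (t / 2), g (2 * j + 1) := by
  induction t with
  | zero => simp
  | succ t ih =>
    rw [Finset.sum_range_succ, ih]
    rcases Nat.even_or_odd t with ⟨u, hu⟩ | ⟨u, hu⟩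
    · have e1 : (t + 1) / 2 = u := by omega
      have e2 : (t + 1 + 1) / 2 = u + 1 := by omega
      have e3 : t / 2 = u := by omega
      rw [e1, e2, e3]
      rw [Finset.sum_range_succ (fun j => g (2 * j)) u]
      have : 2 * u = t := by omega
      rw [this]
      abel
    · have e1 : (t + 1) / 2 = u + 1 := by omega
      have e2 : (t + 1 + 1) / 2 = u + 1 := by omega
      have e3 : t / 2 = u := by omega
      rw [e1, e2, e3]
      rw [Finset.sum_range_succ (fun j => g (2 * j + 1)) u]
      have : 2 * u + 1 = t := by omega
      rw [this]
      abel
end Helpers2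
section Helpers3

lemma myGrange {a f : ℕ → ℝ} (h0 : ∀ i, f (2 * i) = a i) (h1 : ∀ i, f (2 * i + 1) = 0) :
    ∀ j, ∑ i ∈ Finset.range j, f i = ∑ i ∈ Finset.range ((j + 1) / 2), a i := by
  intro j
  induction j with
  | zero => simp
  | succ j ih =>
    rw [Finset.sum_range_succ, ih]
    rcases Nat.even_or_odd j with ⟨u, hu⟩ | ⟨u, hu⟩
    · have e1 : (j + 1) / 2 = u := by omega
      have e2 : (j + 1 + 1) / 2 = u + 1 := by omega
      have e3 : f j = a u := by rw [show j = 2 * u by omega, h0]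
      rw [e1, e2, e3, Finset.sum_range_succ]
    · have e1 : (j + 1) / 2 = u + 1 := by omega
      have e2 : (j + 1 + 1) / 2 = u + 1 := by omega
      have e3 : f j = 0 := by rw [show j = 2 * u + 1 by omega, h1]
      rw [e1, e2, e3, add_zero]

lemma myGIcc {a f : ℕ → ℝ} (h0 : ∀ i, f (2 * i) = a i) (h1 : ∀ i, f (2 * i + 1) = 0)
    {p q : ℕ} (hpq : p ≤ q) :
    ∑ i ∈ Finset.Icc p q, f i = ∑ i ∈ Finset.Icc ((p + 1) / 2) (q / 2), a i := by
  have hIcc : Finset.Icc p q = Finset.Ico p (q + 1) := by rw [Finset.Ico_add_one_right_eq_Icc]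
  have hIcc2 : Finset.Icc ((p + 1) / 2) (q / 2) = Finset.Ico ((p + 1) / 2) (q / 2 + 1) := by
    rw [Finset.Ico_add_one_right_eq_Icc]
  rw [hIcc, hIcc2, Finset.sum_Ico_eq_sub _ (by omega), Finset.sum_Ico_eq_sub _ (by omega),
    myGrange h0 h1, myGrange h0 h1]
  have : (q + 1 + 1) / 2 = q / 2 + 1 := by omega
  rw [this]

lemma myFrange {a f : ℕ → ℝ} (h0 : ∀ i, f (2 * i) = -a i) (h1 : ∀ i, f (2 * i + 1) = a i) :
    ∀ j, ∑ i ∈ Finset.range j, f i = if Odd j then -a (j / 2) else 0 := by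
  intro j
  induction j with
  | zero => simp
  | succ j ih =>
    rw [Finset.sum_range_succ, ih]
    rcases Nat.even_or_odd j with ⟨u, hu⟩ | ⟨u, hu⟩
    · have e3 : f j = -a u := by rw [show j = 2 * u by omega, h0]
      have o1 : ¬ Odd j := by rw [Nat.odd_iff]; omega
      have o2 : Odd (j + 1) := by rw [Nat.odd_iff]; omega
      have e4 : (j + 1) / 2 = u := by omega
      rw [if_neg o1, if_pos o2, e3, e4, zero_add]
    · have e3 : f j = a u := by rw [show j = 2 * u + 1 by omega, h1]
      have o1 : Odd j := by rw [Nat.odd_iff]; omega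
      have o2 : ¬ Odd (j + 1) := by rw [Nat.odd_iff]; omega
      have e4 : j / 2 = u := by omega
      rw [if_pos o1, if_neg o2, e3, e4, neg_add_cancel]

lemma myFIcc {a f : ℕ → ℝ} (h0 : ∀ i, f (2 * i) = -a i) (h1 : ∀ i, f (2 * i + 1) = a i)
    {p q : ℕ} (hpq : p ≤ q) :
    ∑ i ∈ Finset.Icc p q, f i
      = (if Even q then -a (q / 2) else 0) + (if Odd p then a (p / 2) else 0) := by
  have hIcc : Finset.Icc p q = Finset.Ico p (q + 1) := by rw [Finset.Ico_add_one_right_eq_Icc]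
  rw [hIcc, Finset.sum_Ico_eq_sub _ (by omega), myFrange h0 h1, myFrange h0 h1]
  rcases Nat.even_or_odd q with hq | hq <;> rcases Nat.even_or_odd p with hp | hp
  · have o1 : Odd (q + 1) := by rw [Nat.odd_iff]; rw [Nat.even_iff] at hq; omega
    have o2 : ¬ Odd p := by rw [Nat.not_odd_iff_even]; exact hp
    have e1 : (q + 1) / 2 = q / 2 := by rw [Nat.even_iff] at hq; omega
    rw [if_pos o1, if_neg o2, if_pos hq, e1]; simp [o2]
  · have o1 : Odd (q + 1) := by rw [Nat.odd_iff]; rw [Nat.even_iff] at hq; omega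
    have e1 : (q + 1) / 2 = q / 2 := by rw [Nat.even_iff] at hq; omega
    rw [if_pos o1, if_pos hp, if_pos hq, e1]; simp [hp]
  · have o1 : ¬ Odd (q + 1) := by rw [Nat.not_odd_iff_even, Nat.even_iff]; rw [Nat.odd_iff] at hq; omega
    have o2 : ¬ Odd p := by rw [Nat.not_odd_iff_even]; exact hp
    have o3 : ¬ Even q := by rw [Nat.not_even_iff_odd]; exact hq
    rw [if_neg o1, if_neg o2, if_neg o3]; simp [o2]
  · have o1 : ¬ Odd (q + 1) := by rw [Nat.not_odd_iff_even, Nat.even_iff]; rw [Nat.odd_iff] at hq; omega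
    have o3 : ¬ Even q := by rw [Nat.not_even_iff_odd]; exact hq
    rw [if_neg o1, if_pos hp, if_neg o3]; simp [hp]

end Helpers3
section MainAux
variable {E : Type*} [NormedAddCommGroup E] [NormedSpace ℝ E]

lemma myNegNorm (b : ℕ → ℝ) (y : ℕ → E) (t : ℕ) :
    ‖∑ i ∈ Finset.range t, (-b i) • y i‖ = ‖∑ i ∈ Finset.range t, b i • y i‖ := by
  have : ∑ i ∈ Finset.range t, (-b i) • y i = -∑ i ∈ Finset.range t, b i • y i := by
    rw [← Finset.sum_neg_distrib]
    exact Finset.sum_congr rfl fun i _ => by rw [neg_smul]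
  rw [this, norm_neg]

end MainAux

/-- **Theorem.** Let `C > 0`.  There are constants `c, c' > 0` depending only on `C` such
that for every normalized 1-unconditional `C`-right dominant sequence `x` in a real normed
space `X`, with the interlaced sequence `w (2i) = (x i, 0)`, `w (2i+1) = (0, x i)` in
`X × X` (max norm), and every finitely supported `a : ℕ → ℝ`:
(1) the jamesification norm (with respect to `w`) of the difference vectors
`b (2i) = -a i`, `b (2i+1) = a i` is equivalent to `‖∑ a i • x i‖_X`;
(2) the jamesification norm (with respect to `w`) of the sequence `ã (2i) = a i`,
`ã (2i+1) = 0` is equivalent to the jamesification norm of `a` with respect to `x`. -/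
theorem jamesification_of_interlaced_sequence (C : ℝ) (hC : 0 < C) :
    ∃ c c' : ℝ, 0 < c ∧ 0 < c' ∧
      ∀ (X : Type) [NormedAddCommGroup X] [NormedSpace ℝ X],
        ∀ (x : ℕ → X), (∀ i, ‖x i‖ = 1) → OneUnconditional x → RightDominant C x →
        ∀ (w : ℕ → X × X), (∀ i, w (2 * i) = (x i, 0)) → (∀ i, w (2 * i + 1) = (0, x i)) →
        ∀ (a : ℕ → ℝ), (Function.support a).Finite →
          (∀ bb : ℕ → ℝ, (∀ i, bb (2 * i) = -a i) → (∀ i, bb (2 * i + 1) = a i) →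
            c * ‖∑ᶠ i, a i • x i‖ ≤ jamesNorm w bb ∧
            jamesNorm w bb ≤ c' * ‖∑ᶠ i, a i • x i‖) ∧
          (∀ atld : ℕ → ℝ, (∀ i, atld (2 * i) = a i) → (∀ i, atld (2 * i + 1) = 0) →
            c * jamesNorm x a ≤ jamesNorm w atld ∧
            jamesNorm w atld ≤ c' * jamesNorm x a) := by
  refine ⟨1, 1 + 2 * C, one_pos, by linarith, ?_⟩
  intro X _ _ x hx1 hxu hxd w hw0 hw1 a hafin
  obtain ⟨N, hN⟩ : ∃ N : ℕ, ∀ i, N ≤ i → a i = 0 := by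
    rcases Set.Finite.bddAbove hafin with ⟨N0, hN0⟩
    refine ⟨N0 + 1, fun i hi => ?_⟩
    by_contra h
    have : i ≤ N0 := hN0 (Function.mem_support.mpr h)
    omega
  have hsum : ∑ᶠ i, a i • x i = ∑ i ∈ Finset.range N, a i • x i := by
    apply finsum_eq_sum_of_support_subset
    intro i hi
    simp only [Function.mem_support] at hi
    simp only [Finset.coe_range, Set.mem_Iio]
    by_contra h
    exact hi (by rw [hN i (by omega)]; simp)
  set T : ℝ := ‖∑ i ∈ Finset.range N, a i • x i‖ with hTdef
  have hT0 : 0 ≤ T := norm_nonneg _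
  have hwnorm : ∀ j, ‖w j‖ = 1 := by
    intro j
    rcases Nat.even_or_odd j with hj | hj
    · have hj2 : j = 2 * (j / 2) := by rw [Nat.even_iff] at hj; omega
      rw [hj2, hw0, Prod.norm_def]
      simp [hx1]
    · have hj2 : j = 2 * (j / 2) + 1 := by rw [Nat.odd_iff] at hj; omega
      rw [hj2, hw1, Prod.norm_def]
      simp [hx1]
  have wfst : ∀ j, (w j).1 = if Even j then x (j / 2) else 0 := by
    intro j
    rcases Nat.even_or_odd j with hj | hj
    · rw [if_pos hj]
      have hj2 : j = 2 * (j / 2) := by rw [Nat.even_iff] at hj; omega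
      conv_lhs => rw [hj2, hw0]
    · rw [if_neg (by rwa [Nat.not_even_iff_odd])]
      have hj2 : j = 2 * (j / 2) + 1 := by rw [Nat.odd_iff] at hj; omega
      conv_lhs => rw [hj2, hw1]
  have wsnd : ∀ j, (w j).2 = if Even j then 0 else x (j / 2) := by
    intro j
    rcases Nat.even_or_odd j with hj | hj
    · rw [if_pos hj]
      have hj2 : j = 2 * (j / 2) := by rw [Nat.even_iff] at hj; omega
      conv_lhs => rw [hj2, hw0]
    · rw [if_neg (by rwa [Nat.not_even_iff_odd])]
      have hj2 : j = 2 * (j / 2) + 1 := by rw [Nat.odd_iff] at hj; omega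
      conv_lhs => rw [hj2, hw1]
  constructor
  · -- part (1)
    intro bb hbb0 hbb1
    have hbbN : ∀ i, 2 * N ≤ i → bb i = 0 := by
      intro i hi
      rcases Nat.even_or_odd i with hj | hj
      · have hj2 : i = 2 * (i / 2) := by rw [Nat.even_iff] at hj; omega
        rw [hj2, hbb0, hN (i / 2) (by omega), neg_zero]
      · have hj2 : i = 2 * (i / 2) + 1 := by rw [Nat.odd_iff] at hj; omega
        rw [hj2, hbb1]
        exact hN (i / 2) (by omega)
    have hbddW : BddAbove (jamesSet w bb) := myBddAbove hwnorm hbbN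
    constructor
    · -- lower bound
      rw [one_mul, hsum]
      apply le_csSup hbddW
      refine ⟨N, fun n => 2 * n + 1, fun n => 2 * n + 1, fun n => le_rfl,
        fun n => by show 2 * n + 1 < 2 * (n + 1) + 1; omega, ?_⟩
      have hterm : ∀ n, (∑ i ∈ Finset.Icc (2 * n + 1) (2 * n + 1), bb i) • w (2 * n + 1)
          = ((0 : X), a n • x n) := by
        intro n
        rw [Finset.Icc_self, Finset.sum_singleton, hbb1, hw1, Prod.smul_mk, smul_zero]
      rw [Finset.sum_congr rfl fun n _ => hterm n]
      have hsplit : ∑ n ∈ Finset.range N, ((0 : X), a n • x n)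
          = ((0 : X), ∑ n ∈ Finset.range N, a n • x n) := by
        rw [Prod.ext_iff]
        constructor
        · rw [Prod.fst_sum]; simp
        · rw [Prod.snd_sum]
      rw [hsplit, Prod.norm_def]
      simp [max_eq_right (norm_nonneg _)]
    · -- upper bound
      rw [hsum]
      apply csSup_le ⟨0, myZeroMem w bb⟩
      rintro v ⟨r, k, m, hkm, hmk, rfl⟩
      have hkstrict : StrictMono k :=
        strictMono_nat_of_lt_succ fun n => lt_of_le_of_lt (hkm n) (hmk n)
      have hkmono : Monotone k := hkstrict.monotone
      have hcval : ∀ n, ∑ i ∈ Finset.Icc (k n) (m n), bb i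
          = (if Even (m n) then -a (m n / 2) else 0)
            + (if Odd (k n) then a (k n / 2) else 0) := fun n => myFIcc hbb0 hbb1 (hkm n)
      set S := ∑ n ∈ Finset.range r, (∑ i ∈ Finset.Icc (k n) (m n), bb i) • w (k n) with hS
      have hS1 : S.1 = ∑ n ∈ (Finset.range r).filter (fun n => Even (k n) ∧ Even (m n)),
          (-a (m n / 2)) • x (k n / 2) := by
        rw [hS, Prod.fst_sum, Finset.sum_filter]
        apply Finset.sum_congr rfl
        intro n _
        rw [Prod.smul_fst, wfst]
        by_cases h1 : Even (k n)
        · by_cases h2 : Even (m n)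
          · rw [if_pos h1, if_pos (⟨h1, h2⟩ : Even (k n) ∧ Even (m n)), hcval n, if_pos h2,
              if_neg (by rw [Nat.not_odd_iff_even]; exact h1), add_zero]
          · rw [if_pos h1, if_neg (fun hcon => h2 hcon.2), hcval n, if_neg h2,
              if_neg (by rw [Nat.not_odd_iff_even]; exact h1), add_zero, zero_smul]
        · rw [if_neg h1, if_neg (fun hcon => h1 hcon.1), smul_zero]
      have hS2 : S.2 = ∑ n ∈ (Finset.range r).filter (fun n => Odd (k n)),
          (∑ i ∈ Finset.Icc (k n) (m n), bb i) • x (k n / 2) := by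
        rw [hS, Prod.snd_sum, Finset.sum_filter]
        apply Finset.sum_congr rfl
        intro n _
        rw [Prod.smul_snd, wsnd]
        by_cases h1 : Odd (k n)
        · rw [if_neg (by rw [Nat.not_even_iff_odd]; exact h1), if_pos h1]
        · rw [if_pos (Nat.not_odd_iff_even.mp h1), if_neg h1, smul_zero]
      have hE1 : ‖S.1‖ ≤ C * T := by
        rw [hS1]
        obtain ⟨e, he1, he2, he3⟩ :=
          myEnum ((Finset.range r).filter (fun n => Even (k n) ∧ Even (m n)))
            (fun n => (-a (m n / 2)) • x (k n / 2))
        set t := ((Finset.range r).filter (fun n => Even (k n) ∧ Even (m n))).card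
        have hmem : ∀ i, i < t → Even (k (e i)) ∧ Even (m (e i)) := fun i hi =>
          (Finset.mem_filter.mp (he2 i hi)).2
        rw [he3, myNegNorm (fun i => a (m (e i) / 2)) (fun i => x (k (e i) / 2)) t]
        calc ‖∑ i ∈ Finset.range t, a (m (e i) / 2) • x (k (e i) / 2)‖
            ≤ C * ‖∑ i ∈ Finset.range t, a (m (e i) / 2) • x (m (e i) / 2)‖ := by
              apply myDom hxd t (fun i => k (e i) / 2) (fun i => m (e i) / 2)
                (fun i => a (m (e i) / 2))
              · intro n _
                exact Nat.div_le_div_right (hkm (e n))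
              · intro n hn
                have h1 : m (e n) % 2 = 0 := Nat.even_iff.mp (hmem n (by omega)).2
                have h2 : k (e (n + 1)) % 2 = 0 := Nat.even_iff.mp (hmem (n + 1) hn).1
                have hlt : m (e n) < k (e (n + 1)) :=
                  lt_of_lt_of_le (hmk (e n)) (hkmono (by have := he1 n hn; omega))
                omega
          _ ≤ C * T := by
              apply mul_le_mul_of_nonneg_left _ hC.le
              apply mySumMapLe hxu hN (fun i => m (e i) / 2) t
              intro i hi
              have h1 : m (e i) % 2 = 0 := Nat.even_iff.mp (hmem i (by omega)).2
              have h2 : m (e (i + 1)) % 2 = 0 := Nat.even_iff.mp (hmem (i + 1) hi).2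
              have hlt : m (e i) < k (e (i + 1)) :=
                lt_of_lt_of_le (hmk (e i)) (hkmono (by have := he1 i hi; omega))
              have hle : k (e (i + 1)) ≤ m (e (i + 1)) := hkm _
              omega
      have hE23 : ‖S.2‖ ≤ T + (C * T + C * T) := by
        rw [hS2]
        have hsplit2 : ∑ n ∈ (Finset.range r).filter (fun n => Odd (k n)),
              (∑ i ∈ Finset.Icc (k n) (m n), bb i) • x (k n / 2)
            = (∑ n ∈ (Finset.range r).filter (fun n => Odd (k n)),
                a (k n / 2) • x (k n / 2))
              + ∑ n ∈ (Finset.range r).filter (fun n => Odd (k n)),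
                (if Even (m n) then -a (m n / 2) else 0) • x (k n / 2) := by
          rw [← Finset.sum_add_distrib]
          apply Finset.sum_congr rfl
          intro n hn
          have hodd : Odd (k n) := (Finset.mem_filter.mp hn).2
          rw [hcval n, if_pos hodd, add_smul]
          abel
        rw [hsplit2]
        refine le_trans (norm_add_le _ _) (add_le_add ?_ ?_)
        · -- part with a (k n / 2)
          obtain ⟨e, he1, he2, he3⟩ :=
            myEnum ((Finset.range r).filter (fun n => Odd (k n)))
              (fun n => a (k n / 2) • x (k n / 2))
          set t := ((Finset.range r).filter (fun n => Odd (k n))).card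
          have hmem : ∀ i, i < t → Odd (k (e i)) := fun i hi =>
            (Finset.mem_filter.mp (he2 i hi)).2
          rw [he3]
          apply mySumMapLe hxu hN (fun i => k (e i) / 2) t
          intro i hi
          have h1 : k (e i) % 2 = 1 := Nat.odd_iff.mp (hmem i (by omega))
          have h2 : k (e (i + 1)) % 2 = 1 := Nat.odd_iff.mp (hmem (i + 1) hi)
          have hlt : k (e i) < k (e (i + 1)) := hkstrict (he1 i hi)
          omega
        · -- part with -a (m n / 2), needs splitting
          have hrw : ∑ n ∈ (Finset.range r).filter (fun n => Odd (k n)),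
                (if Even (m n) then -a (m n / 2) else 0) • x (k n / 2)
              = ∑ n ∈ (Finset.range r).filter (fun n => Odd (k n) ∧ Even (m n)),
                (-a (m n / 2)) • x (k n / 2) := by
            rw [← Finset.filter_filter, Finset.sum_filter
              (s := (Finset.range r).filter (fun n => Odd (k n)))
              (p := fun n => Even (m n))]
            apply Finset.sum_congr rfl
            intro n _
            by_cases h2 : Even (m n)
            · rw [if_pos h2, if_pos h2]
            · rw [if_neg h2, if_neg h2, zero_smul]
          rw [hrw]
          obtain ⟨e, he1, he2, he3⟩ :=
            myEnum ((Finset.range r).filter (fun n => Odd (k n) ∧ Even (m n)))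
              (fun n => (-a (m n / 2)) • x (k n / 2))
          set t := ((Finset.range r).filter (fun n => Odd (k n) ∧ Even (m n))).card with htdef
          have hmem : ∀ i, i < t → Odd (k (e i)) ∧ Even (m (e i)) := fun i hi =>
            (Finset.mem_filter.mp (he2 i hi)).2
          have hestrict := myConsecStrict he1
          rw [he3, mySumSplit (fun i => (-a (m (e i) / 2)) • x (k (e i) / 2)) t]
          refine le_trans (norm_add_le _ _) (add_le_add ?_ ?_)
          · -- even positions
            rw [show (∑ j ∈ Finset.range ((t + 1) / 2),
                (fun i => (-a (m (e i) / 2)) • x (k (e i) / 2)) (2 * j))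
              = ∑ j ∈ Finset.range ((t + 1) / 2),
                (-a (m (e (2 * j)) / 2)) • x (k (e (2 * j)) / 2) from rfl]
            rw [myNegNorm (fun j => a (m (e (2 * j)) / 2)) (fun j => x (k (e (2 * j)) / 2))]
            calc ‖∑ j ∈ Finset.range ((t + 1) / 2), a (m (e (2 * j)) / 2) • x (k (e (2 * j)) / 2)‖
                ≤ C * ‖∑ j ∈ Finset.range ((t + 1) / 2),
                    a (m (e (2 * j)) / 2) • x (m (e (2 * j)) / 2)‖ := by
                  apply myDom hxd _ (fun j => k (e (2 * j)) / 2) (fun j => m (e (2 * j)) / 2)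
                    (fun j => a (m (e (2 * j)) / 2))
                  · intro n _
                    exact Nat.div_le_div_right (hkm (e (2 * n)))
                  · intro n hn
                    have hb : 2 * n + 2 < t := by omega
                    have q0 : m (e (2 * n)) % 2 = 0 := Nat.even_iff.mp (hmem (2 * n) (by omega)).2
                    have k1 : k (e (2 * n + 1)) % 2 = 1 :=
                      Nat.odd_iff.mp (hmem (2 * n + 1) (by omega)).1
                    have k2 : k (e (2 * n + 2)) % 2 = 1 :=
                      Nat.odd_iff.mp (hmem (2 * n + 2) hb).1
                    have m1 : m (e (2 * n + 1)) % 2 = 0 :=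
                      Nat.even_iff.mp (hmem (2 * n + 1) (by omega)).2
                    have c1 : m (e (2 * n)) < k (e (2 * n + 1)) :=
                      lt_of_lt_of_le (hmk (e (2 * n)))
                        (hkmono (by have := hestrict (2 * n) (2 * n + 1) (by omega) (by omega); omega))
                    have c2 : k (e (2 * n + 1)) ≤ m (e (2 * n + 1)) := hkm _
                    have c3 : m (e (2 * n + 1)) < k (e (2 * n + 2)) :=
                      lt_of_lt_of_le (hmk (e (2 * n + 1)))
                        (hkmono (by have := hestrict (2 * n + 1) (2 * n + 2) (by omega) hb; omega))
                    have goal2 : 2 * (n + 1) = 2 * n + 2 := by omega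
                    rw [goal2]
                    omega
              _ ≤ C * T := by
                  apply mul_le_mul_of_nonneg_left _ hC.le
                  apply mySumMapLe hxu hN (fun j => m (e (2 * j)) / 2) ((t + 1) / 2)
                  intro i hi
                  have hb : 2 * i + 2 < t := by omega
                  have q0 : m (e (2 * i)) % 2 = 0 := Nat.even_iff.mp (hmem (2 * i) (by omega)).2
                  have q2 : m (e (2 * i + 2)) % 2 = 0 := Nat.even_iff.mp (hmem (2 * i + 2) hb).2
                  have c1 : m (e (2 * i)) < k (e (2 * i + 1)) :=
                    lt_of_lt_of_le (hmk (e (2 * i)))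
                      (hkmono (by have := hestrict (2 * i) (2 * i + 1) (by omega) (by omega); omega))
                  have c2 : k (e (2 * i + 1)) ≤ m (e (2 * i + 1)) := hkm _
                  have c3 : m (e (2 * i + 1)) < k (e (2 * i + 2)) :=
                    lt_of_lt_of_le (hmk (e (2 * i + 1)))
                      (hkmono (by have := hestrict (2 * i + 1) (2 * i + 2) (by omega) hb; omega))
                  have c4 : k (e (2 * i + 2)) ≤ m (e (2 * i + 2)) := hkm _
                  have goal2 : 2 * (i + 1) = 2 * i + 2 := by omega
                  rw [goal2]
                  omega
          · -- odd positions
            rw [show (∑ j ∈ Finset.range (t / 2),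
                (fun i => (-a (m (e i) / 2)) • x (k (e i) / 2)) (2 * j + 1))
              = ∑ j ∈ Finset.range (t / 2),
                (-a (m (e (2 * j + 1)) / 2)) • x (k (e (2 * j + 1)) / 2) from rfl]
            rw [myNegNorm (fun j => a (m (e (2 * j + 1)) / 2)) (fun j => x (k (e (2 * j + 1)) / 2))]
            calc ‖∑ j ∈ Finset.range (t / 2),
                  a (m (e (2 * j + 1)) / 2) • x (k (e (2 * j + 1)) / 2)‖
                ≤ C * ‖∑ j ∈ Finset.range (t / 2),
                    a (m (e (2 * j + 1)) / 2) • x (m (e (2 * j + 1)) / 2)‖ := by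
                  apply myDom hxd _ (fun j => k (e (2 * j + 1)) / 2)
                    (fun j => m (e (2 * j + 1)) / 2) (fun j => a (m (e (2 * j + 1)) / 2))
                  · intro n _
                    exact Nat.div_le_div_right (hkm (e (2 * n + 1)))
                  · intro n hn
                    have hb : 2 * n + 3 < t := by omega
                    have q0 : m (e (2 * n + 1)) % 2 = 0 :=
                      Nat.even_iff.mp (hmem (2 * n + 1) (by omega)).2
                    have k1 : k (e (2 * n + 2)) % 2 = 1 :=
                      Nat.odd_iff.mp (hmem (2 * n + 2) (by omega)).1
                    have k2 : k (e (2 * n + 3)) % 2 = 1 :=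
                      Nat.odd_iff.mp (hmem (2 * n + 3) hb).1
                    have m1 : m (e (2 * n + 2)) % 2 = 0 :=
                      Nat.even_iff.mp (hmem (2 * n + 2) (by omega)).2
                    have c1 : m (e (2 * n + 1)) < k (e (2 * n + 2)) :=
                      lt_of_lt_of_le (hmk (e (2 * n + 1)))
                        (hkmono (by have := hestrict (2 * n + 1) (2 * n + 2) (by omega) (by omega); omega))
                    have c2 : k (e (2 * n + 2)) ≤ m (e (2 * n + 2)) := hkm _
                    have c3 : m (e (2 * n + 2)) < k (e (2 * n + 3)) :=
                      lt_of_lt_of_le (hmk (e (2 * n + 2)))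
                        (hkmono (by have := hestrict (2 * n + 2) (2 * n + 3) (by omega) hb; omega))
                    have goal2 : 2 * (n + 1) + 1 = 2 * n + 3 := by omega
                    rw [goal2]
                    omega
              _ ≤ C * T := by
                  apply mul_le_mul_of_nonneg_left _ hC.le
                  apply mySumMapLe hxu hN (fun j => m (e (2 * j + 1)) / 2) (t / 2)
                  intro i hi
                  have hb : 2 * i + 3 < t := by omega
                  have q0 : m (e (2 * i + 1)) % 2 = 0 :=
                    Nat.even_iff.mp (hmem (2 * i + 1) (by omega)).2
                  have q2 : m (e (2 * i + 3)) % 2 = 0 := Nat.even_iff.mp (hmem (2 * i + 3) hb).2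
                  have c1 : m (e (2 * i + 1)) < k (e (2 * i + 2)) :=
                    lt_of_lt_of_le (hmk (e (2 * i + 1)))
                      (hkmono (by have := hestrict (2 * i + 1) (2 * i + 2) (by omega) (by omega); omega))
                  have c2 : k (e (2 * i + 2)) ≤ m (e (2 * i + 2)) := hkm _
                  have c3 : m (e (2 * i + 2)) < k (e (2 * i + 3)) :=
                    lt_of_lt_of_le (hmk (e (2 * i + 2)))
                      (hkmono (by have := hestrict (2 * i + 2) (2 * i + 3) (by omega) hb; omega))
                  have c4 : k (e (2 * i + 3)) ≤ m (e (2 * i + 3)) := hkm _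
                  have goal2 : 2 * (i + 1) + 1 = 2 * i + 3 := by omega
                  rw [goal2]
                  omega
      have hfinal : ‖S‖ = max ‖S.1‖ ‖S.2‖ := Prod.norm_def S
      rw [hfinal]
      apply max_le
      · nlinarith
      · nlinarith
  · -- part (2)
    intro atld h0 h1
    have hatldN : ∀ i, 2 * N ≤ i → atld i = 0 := by
      intro i hi
      rcases Nat.even_or_odd i with hj | hj
      · have hj2 : i = 2 * (i / 2) := by rw [Nat.even_iff] at hj; omega
        rw [hj2, h0]
        exact hN (i / 2) (by omega)
      · have hj2 : i = 2 * (i / 2) + 1 := by rw [Nat.odd_iff] at hj; omega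
        rw [hj2, h1]
    have hbddW : BddAbove (jamesSet w atld) := myBddAbove hwnorm hatldN
    have hbddX : BddAbove (jamesSet x a) := myBddAbove hx1 hN
    have hJ0 : 0 ≤ jamesNorm x a := le_csSup hbddX (myZeroMem x a)
    constructor
    · -- lower bound
      rw [one_mul]
      apply csSup_le ⟨0, myZeroMem x a⟩
      rintro v ⟨r, k, m, hkm, hmk, rfl⟩
      apply le_csSup hbddW
      refine ⟨r, fun n => 2 * k n, fun n => 2 * m n + 1,
        fun n => by show 2 * k n ≤ 2 * m n + 1; have := hkm n; omega,
        fun n => by show 2 * m n + 1 < 2 * k (n + 1); have := hmk n; omega, ?_⟩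
      have hterm : ∀ n, (∑ i ∈ Finset.Icc (2 * k n) (2 * m n + 1), atld i) • w (2 * k n)
          = ((∑ i ∈ Finset.Icc (k n) (m n), a i) • x (k n), (0 : X)) := by
        intro n
        have hcoef : ∑ i ∈ Finset.Icc (2 * k n) (2 * m n + 1), atld i
            = ∑ i ∈ Finset.Icc (k n) (m n), a i := by
          rw [myGIcc h0 h1 (by have := hkm n; omega)]
          have e1 : (2 * k n + 1) / 2 = k n := by omega
          have e2 : (2 * m n + 1) / 2 = m n := by omega
          rw [e1, e2]
        rw [hcoef, hw0, Prod.smul_mk, smul_zero]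
      rw [Finset.sum_congr rfl fun n _ => hterm n]
      have hsplit : ∑ n ∈ Finset.range r, ((∑ i ∈ Finset.Icc (k n) (m n), a i) • x (k n), (0 : X))
          = (∑ n ∈ Finset.range r, (∑ i ∈ Finset.Icc (k n) (m n), a i) • x (k n), (0 : X)) := by
        rw [Prod.ext_iff]
        constructor
        · rw [Prod.fst_sum]
        · rw [Prod.snd_sum]; simp
      rw [hsplit, Prod.norm_def]
      simp [max_eq_left (norm_nonneg _)]
    · -- upper bound
      apply csSup_le ⟨0, myZeroMem w atld⟩
      rintro v ⟨r, k, m, hkm, hmk, rfl⟩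
      have hkstrict : StrictMono k :=
        strictMono_nat_of_lt_succ fun n => lt_of_le_of_lt (hkm n) (hmk n)
      have hkmono : Monotone k := hkstrict.monotone
      have hcval : ∀ n, ∑ i ∈ Finset.Icc (k n) (m n), atld i
          = ∑ i ∈ Finset.Icc ((k n + 1) / 2) (m n / 2), a i := fun n => myGIcc h0 h1 (hkm n)
      set S := ∑ n ∈ Finset.range r, (∑ i ∈ Finset.Icc (k n) (m n), atld i) • w (k n) with hS
      set J := jamesNorm x a with hJ
      have hS1 : S.1 = ∑ n ∈ (Finset.range r).filter (fun n => Even (k n)),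
          (∑ i ∈ Finset.Icc (k n) (m n), atld i) • x (k n / 2) := by
        rw [hS, Prod.fst_sum, Finset.sum_filter]
        apply Finset.sum_congr rfl
        intro n _
        rw [Prod.smul_fst, wfst]
        by_cases hp : Even (k n)
        · rw [if_pos hp, if_pos hp]
        · rw [if_neg hp, if_neg hp, smul_zero]
      have hS2 : S.2 = ∑ n ∈ (Finset.range r).filter
            (fun n => Odd (k n) ∧ k n / 2 + 1 ≤ m n / 2),
          (∑ i ∈ Finset.Icc (k n) (m n), atld i) • x (k n / 2) := by
        rw [hS, Prod.snd_sum, Finset.sum_filter]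
        apply Finset.sum_congr rfl
        intro n _
        rw [Prod.smul_snd, wsnd]
        by_cases hp : Odd (k n)
        · rw [if_neg (by rw [Nat.not_even_iff_odd]; exact hp)]
          by_cases hq : k n / 2 + 1 ≤ m n / 2
          · rw [if_pos ⟨hp, hq⟩]
          · rw [if_neg (fun hcon => hq hcon.2)]
            have hk1 : (k n + 1) / 2 = k n / 2 + 1 := by rw [Nat.odd_iff] at hp; omega
            have hz : ∑ i ∈ Finset.Icc (k n) (m n), atld i = 0 := by
              rw [hcval n, hk1, Finset.Icc_eq_empty (by omega), Finset.sum_empty]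
            rw [hz, zero_smul]
        · rw [if_pos (Nat.not_odd_iff_even.mp hp), if_neg (fun hcon => hp hcon.1), smul_zero]
      have hE1 : ‖S.1‖ ≤ J := by
        rw [hS1]
        obtain ⟨e, he1, he2, he3⟩ :=
          myEnum ((Finset.range r).filter (fun n => Even (k n)))
            (fun n => (∑ i ∈ Finset.Icc (k n) (m n), atld i) • x (k n / 2))
        set t := ((Finset.range r).filter (fun n => Even (k n))).card
        have hmem : ∀ i, i < t → Even (k (e i)) := fun i hi =>
          (Finset.mem_filter.mp (he2 i hi)).2
        rw [he3]
        have hrw2 : ∑ i ∈ Finset.range t,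
              (∑ j ∈ Finset.Icc (k (e i)) (m (e i)), atld j) • x (k (e i) / 2)
            = ∑ i ∈ Finset.range t,
              (∑ j ∈ Finset.Icc (k (e i) / 2) (m (e i) / 2), a j) • x (k (e i) / 2) := by
          apply Finset.sum_congr rfl
          intro i hi
          have hev : k (e i) % 2 = 0 := Nat.even_iff.mp (hmem i (Finset.mem_range.mp hi))
          have e1 : (k (e i) + 1) / 2 = k (e i) / 2 := by omega
          rw [hcval (e i), e1]
        rw [hrw2]
        apply le_csSup hbddX
        apply myMemJames x a t (fun i => k (e i) / 2) (fun i => m (e i) / 2)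
        · intro n _
          exact Nat.div_le_div_right (hkm (e n))
        · intro n hn
          have h1 : k (e (n + 1)) % 2 = 0 := Nat.even_iff.mp (hmem (n + 1) hn)
          have hlt : m (e n) < k (e (n + 1)) :=
            lt_of_lt_of_le (hmk (e n)) (hkmono (by have := he1 n hn; omega))
          omega
      have hE2 : ‖S.2‖ ≤ C * J + C * J := by
        rw [hS2]
        obtain ⟨e, he1, he2, he3⟩ :=
          myEnum ((Finset.range r).filter (fun n => Odd (k n) ∧ k n / 2 + 1 ≤ m n / 2))
            (fun n => (∑ i ∈ Finset.Icc (k n) (m n), atld i) • x (k n / 2))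
        set t := ((Finset.range r).filter
          (fun n => Odd (k n) ∧ k n / 2 + 1 ≤ m n / 2)).card with htdef
        have hmem : ∀ i, i < t → Odd (k (e i)) ∧ k (e i) / 2 + 1 ≤ m (e i) / 2 := fun i hi =>
          (Finset.mem_filter.mp (he2 i hi)).2
        have hestrict := myConsecStrict he1
        rw [he3, mySumSplit
          (fun i => (∑ j ∈ Finset.Icc (k (e i)) (m (e i)), atld j) • x (k (e i) / 2)) t]
        refine le_trans (norm_add_le _ _) (add_le_add ?_ ?_)
        · -- even positions
          rw [show (∑ j ∈ Finset.range ((t + 1) / 2),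
              (fun i => (∑ jj ∈ Finset.Icc (k (e i)) (m (e i)), atld jj) • x (k (e i) / 2)) (2 * j))
            = ∑ j ∈ Finset.range ((t + 1) / 2),
              (∑ jj ∈ Finset.Icc (k (e (2 * j))) (m (e (2 * j))), atld jj) • x (k (e (2 * j)) / 2)
            from rfl]
          calc ‖∑ j ∈ Finset.range ((t + 1) / 2),
                (∑ jj ∈ Finset.Icc (k (e (2 * j))) (m (e (2 * j))), atld jj) • x (k (e (2 * j)) / 2)‖
              ≤ C * ‖∑ j ∈ Finset.range ((t + 1) / 2),
                  (∑ jj ∈ Finset.Icc (k (e (2 * j))) (m (e (2 * j))), atld jj)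
                    • x (k (e (2 * j)) / 2 + 1)‖ := by
                apply myDom hxd _ (fun j => k (e (2 * j)) / 2) (fun j => k (e (2 * j)) / 2 + 1)
                  (fun j => ∑ jj ∈ Finset.Icc (k (e (2 * j))) (m (e (2 * j))), atld jj)
                · intro n _
                  omega
                · intro n hn
                  have hb : 2 * n + 2 < t := by omega
                  have k0 : k (e (2 * n)) % 2 = 1 := Nat.odd_iff.mp (hmem (2 * n) (by omega)).1
                  have k1 : k (e (2 * n + 1)) % 2 = 1 :=
                    Nat.odd_iff.mp (hmem (2 * n + 1) (by omega)).1
                  have k2 : k (e (2 * n + 2)) % 2 = 1 := Nat.odd_iff.mp (hmem (2 * n + 2) hb).1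
                  have g0 : k (e (2 * n)) / 2 + 1 ≤ m (e (2 * n)) / 2 := (hmem (2 * n) (by omega)).2
                  have g1 : k (e (2 * n + 1)) / 2 + 1 ≤ m (e (2 * n + 1)) / 2 :=
                    (hmem (2 * n + 1) (by omega)).2
                  have c1 : m (e (2 * n)) < k (e (2 * n + 1)) :=
                    lt_of_lt_of_le (hmk (e (2 * n)))
                      (hkmono (by have := hestrict (2 * n) (2 * n + 1) (by omega) (by omega); omega))
                  have c2 : m (e (2 * n + 1)) < k (e (2 * n + 2)) :=
                    lt_of_lt_of_le (hmk (e (2 * n + 1)))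
                      (hkmono (by have := hestrict (2 * n + 1) (2 * n + 2) (by omega) hb; omega))
                  have goal2 : 2 * (n + 1) = 2 * n + 2 := by omega
                  rw [goal2]
                  omega
            _ ≤ C * J := by
                apply mul_le_mul_of_nonneg_left _ hC.le
                have hrw2 : ∑ j ∈ Finset.range ((t + 1) / 2),
                      (∑ jj ∈ Finset.Icc (k (e (2 * j))) (m (e (2 * j))), atld jj)
                        • x (k (e (2 * j)) / 2 + 1)
                    = ∑ j ∈ Finset.range ((t + 1) / 2),
                      (∑ jj ∈ Finset.Icc (k (e (2 * j)) / 2 + 1) (m (e (2 * j)) / 2), a jj)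
                        • x (k (e (2 * j)) / 2 + 1) := by
                  apply Finset.sum_congr rfl
                  intro j hj
                  have hodd : k (e (2 * j)) % 2 = 1 :=
                    Nat.odd_iff.mp (hmem (2 * j) (by
                      have := Finset.mem_range.mp hj; omega)).1
                  have e1 : (k (e (2 * j)) + 1) / 2 = k (e (2 * j)) / 2 + 1 := by omega
                  rw [hcval (e (2 * j)), e1]
                rw [hrw2]
                apply le_csSup hbddX
                apply myMemJames x a ((t + 1) / 2) (fun j => k (e (2 * j)) / 2 + 1)
                  (fun j => m (e (2 * j)) / 2)
                · intro n hn
                  exact (hmem (2 * n) (by omega)).2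
                · intro n hn
                  have hb : 2 * n + 2 < t := by omega
                  have k1 : k (e (2 * n + 1)) % 2 = 1 :=
                    Nat.odd_iff.mp (hmem (2 * n + 1) (by omega)).1
                  have k2 : k (e (2 * n + 2)) % 2 = 1 := Nat.odd_iff.mp (hmem (2 * n + 2) hb).1
                  have g1 : k (e (2 * n + 1)) / 2 + 1 ≤ m (e (2 * n + 1)) / 2 :=
                    (hmem (2 * n + 1) (by omega)).2
                  have c1 : m (e (2 * n)) < k (e (2 * n + 1)) :=
                    lt_of_lt_of_le (hmk (e (2 * n)))
                      (hkmono (by have := hestrict (2 * n) (2 * n + 1) (by omega) (by omega); omega))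
                  have c2 : m (e (2 * n + 1)) < k (e (2 * n + 2)) :=
                    lt_of_lt_of_le (hmk (e (2 * n + 1)))
                      (hkmono (by have := hestrict (2 * n + 1) (2 * n + 2) (by omega) hb; omega))
                  have goal2 : 2 * (n + 1) = 2 * n + 2 := by omega
                  rw [goal2]
                  omega
        · -- odd positions
          rw [show (∑ j ∈ Finset.range (t / 2),
              (fun i => (∑ jj ∈ Finset.Icc (k (e i)) (m (e i)), atld jj) • x (k (e i) / 2))
                (2 * j + 1))
            = ∑ j ∈ Finset.range (t / 2),
              (∑ jj ∈ Finset.Icc (k (e (2 * j + 1))) (m (e (2 * j + 1))), atld jj)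
                • x (k (e (2 * j + 1)) / 2)
            from rfl]
          calc ‖∑ j ∈ Finset.range (t / 2),
                (∑ jj ∈ Finset.Icc (k (e (2 * j + 1))) (m (e (2 * j + 1))), atld jj)
                  • x (k (e (2 * j + 1)) / 2)‖
              ≤ C * ‖∑ j ∈ Finset.range (t / 2),
                  (∑ jj ∈ Finset.Icc (k (e (2 * j + 1))) (m (e (2 * j + 1))), atld jj)
                    • x (k (e (2 * j + 1)) / 2 + 1)‖ := by
                apply myDom hxd _ (fun j => k (e (2 * j + 1)) / 2)
                  (fun j => k (e (2 * j + 1)) / 2 + 1)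
                  (fun j => ∑ jj ∈ Finset.Icc (k (e (2 * j + 1))) (m (e (2 * j + 1))), atld jj)
                · intro n _
                  omega
                · intro n hn
                  have hb : 2 * n + 3 < t := by omega
                  have k0 : k (e (2 * n + 1)) % 2 = 1 :=
                    Nat.odd_iff.mp (hmem (2 * n + 1) (by omega)).1
                  have k1 : k (e (2 * n + 2)) % 2 = 1 :=
                    Nat.odd_iff.mp (hmem (2 * n + 2) (by omega)).1
                  have k2 : k (e (2 * n + 3)) % 2 = 1 := Nat.odd_iff.mp (hmem (2 * n + 3) hb).1
                  have g0 : k (e (2 * n + 1)) / 2 + 1 ≤ m (e (2 * n + 1)) / 2 :=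
                    (hmem (2 * n + 1) (by omega)).2
                  have g1 : k (e (2 * n + 2)) / 2 + 1 ≤ m (e (2 * n + 2)) / 2 :=
                    (hmem (2 * n + 2) (by omega)).2
                  have c1 : m (e (2 * n + 1)) < k (e (2 * n + 2)) :=
                    lt_of_lt_of_le (hmk (e (2 * n + 1)))
                      (hkmono (by have := hestrict (2 * n + 1) (2 * n + 2) (by omega) (by omega); omega))
                  have c2 : m (e (2 * n + 2)) < k (e (2 * n + 3)) :=
                    lt_of_lt_of_le (hmk (e (2 * n + 2)))
                      (hkmono (by have := hestrict (2 * n + 2) (2 * n + 3) (by omega) hb; omega))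
                  have goal2 : 2 * (n + 1) + 1 = 2 * n + 3 := by omega
                  rw [goal2]
                  omega
            _ ≤ C * J := by
                apply mul_le_mul_of_nonneg_left _ hC.le
                have hrw2 : ∑ j ∈ Finset.range (t / 2),
                      (∑ jj ∈ Finset.Icc (k (e (2 * j + 1))) (m (e (2 * j + 1))), atld jj)
                        • x (k (e (2 * j + 1)) / 2 + 1)
                    = ∑ j ∈ Finset.range (t / 2),
                      (∑ jj ∈ Finset.Icc (k (e (2 * j + 1)) / 2 + 1) (m (e (2 * j + 1)) / 2), a jj)
                        • x (k (e (2 * j + 1)) / 2 + 1) := by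
                  apply Finset.sum_congr rfl
                  intro j hj
                  have hodd : k (e (2 * j + 1)) % 2 = 1 :=
                    Nat.odd_iff.mp (hmem (2 * j + 1) (by
                      have := Finset.mem_range.mp hj; omega)).1
                  have e1 : (k (e (2 * j + 1)) + 1) / 2 = k (e (2 * j + 1)) / 2 + 1 := by omega
                  rw [hcval (e (2 * j + 1)), e1]
                rw [hrw2]
                apply le_csSup hbddX
                apply myMemJames x a (t / 2) (fun j => k (e (2 * j + 1)) / 2 + 1)
                  (fun j => m (e (2 * j + 1)) / 2)
                · intro n hn
                  exact (hmem (2 * n + 1) (by omega)).2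
                · intro n hn
                  have hb : 2 * n + 3 < t := by omega
                  have k1 : k (e (2 * n + 2)) % 2 = 1 :=
                    Nat.odd_iff.mp (hmem (2 * n + 2) (by omega)).1
                  have k2 : k (e (2 * n + 3)) % 2 = 1 := Nat.odd_iff.mp (hmem (2 * n + 3) hb).1
                  have g1 : k (e (2 * n + 2)) / 2 + 1 ≤ m (e (2 * n + 2)) / 2 :=
                    (hmem (2 * n + 2) (by omega)).2
                  have c1 : m (e (2 * n + 1)) < k (e (2 * n + 2)) :=
                    lt_of_lt_of_le (hmk (e (2 * n + 1)))
                      (hkmono (by have := hestrict (2 * n + 1) (2 * n + 2) (by omega) (by omega); omega))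
                  have c2 : m (e (2 * n + 2)) < k (e (2 * n + 3)) :=
                    lt_of_lt_of_le (hmk (e (2 * n + 2)))
                      (hkmono (by have := hestrict (2 * n + 2) (2 * n + 3) (by omega) hb; omega))
                  have goal2 : 2 * (n + 1) + 1 = 2 * n + 3 := by omega
                  rw [goal2]
                  omega
      have hfinal : ‖S‖ = max ‖S.1‖ ‖S.2‖ := Prod.norm_def S
      rw [hfinal]
      apply max_le
      · nlinarith
      · nlinarith
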